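/- Let M ∈ SL(2,ℤ) be hyperbolic with eigenvalues e^{±λ}, let N ∈ ℕ*, and let e^{iφ₁},…,e^{iφ_N} be N complex numbers of modulus 1 (the quantum eigenvalues). Define the resonances r_{n,k} = e^{iφ_k − λ(n+1/2)} for k ∈ {1,…,N}, n ∈ ℕ. Then for every positive integer t, Σ_{k=1}^{N} e^{iφ_k t} = √(|det(1 − Mᵗ)|) · Σ_{k=1}^{N} Σ_{n≥0} (r_{n,k})ᵗ, where the double sum converges absolutely. -/

import Mathlib

open Matrix Complex

lemma aux_sq (A : Matrix (Fin 2) (Fin 2) ℝ) :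
    A * A = A.trace • A - A.det • 1 := by
  ext i j
  fin_cases i <;> fin_cases j <;>
    simp [Matrix.mul_apply, Fin.sum_univ_two, Matrix.trace_fin_two, Matrix.det_fin_two,
      Matrix.one_apply] <;> ring

lemma aux_trace_pow (A : Matrix (Fin 2) (Fin 2) ℝ) (hd : A.det = 1)
    (x : ℝ) (hx : x ≠ 0) (htr : A.trace = x + x⁻¹) (n : ℕ) :
    (A ^ n).trace = x ^ n + x⁻¹ ^ n := by
  suffices h : ∀ m : ℕ, (A ^ m).trace = x ^ m + x⁻¹ ^ m ∧
      (A ^ (m+1)).trace = x ^ (m+1) + x⁻¹ ^ (m+1) from (h n).1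
  intro m
  induction m with
  | zero =>
    constructor
    · norm_num
    · simpa using htr
  | succ m ih =>
    refine ⟨ih.2, ?_⟩
    have h2 : A ^ (m+2) = A.trace • A ^ (m+1) - A.det • A ^ m := by
      have : A ^ (m+2) = A ^ m * (A * A) := by rw [pow_add, sq]
      rw [this, aux_sq A, Matrix.mul_sub, mul_smul_comm, mul_smul_comm, mul_one,
        ← pow_succ]
    rw [h2, Matrix.trace_sub, Matrix.trace_smul, Matrix.trace_smul, hd, htr, ih.1, ih.2]
    have hxx : x * x⁻¹ = 1 := mul_inv_cancel₀ hx
    simp only [smul_eq_mul]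
    linear_combination (x ^ m + x⁻¹ ^ m) * hxx

lemma aux_det_one_sub (B : Matrix (Fin 2) (Fin 2) ℝ) (h1 : B.det = 1) :
    ((1 : Matrix (Fin 2) (Fin 2) ℝ) - B).det = 2 - B.trace := by
  rw [Matrix.det_fin_two] at h1 ⊢
  rw [Matrix.trace_fin_two]
  simp only [Matrix.sub_apply, Matrix.one_apply_eq, Matrix.one_apply_ne (by decide : (0:Fin 2) ≠ 1),
    Matrix.one_apply_ne (by decide : (1:Fin 2) ≠ 0)]
  linear_combination h1

lemma aux_sqrt (c : ℝ) (hc : 0 < c) :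
    Real.sqrt |2 - (Real.exp c + Real.exp (-c))| = Real.exp (c/2) - Real.exp (-(c/2)) := by
  have ha : Real.exp (c/2) * Real.exp (c/2) = Real.exp c := by
    rw [← Real.exp_add]; ring_nf
  have hb : Real.exp (-(c/2)) * Real.exp (-(c/2)) = Real.exp (-c) := by
    rw [← Real.exp_add]; ring_nf
  have hab : Real.exp (c/2) * Real.exp (-(c/2)) = 1 := by
    rw [← Real.exp_add]; simp
  have hge : Real.exp (-(c/2)) ≤ Real.exp (c/2) := Real.exp_le_exp.mpr (by linarith)
  have h2 : (2:ℝ) - (Real.exp c + Real.exp (-c)) = -((Real.exp (c/2) - Real.exp (-(c/2)))^2) := by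
    nlinarith [ha, hb, hab]
  rw [h2, abs_neg, _root_.abs_of_nonneg (sq_nonneg _), Real.sqrt_sq (by linarith)]

/-- Relation between the quantum trace and the sum over prequantum resonances:
Σ_k e^{iφ_k t} = √|det(1 − Mᵗ)| · Σ_k Σ_{n≥0} (r_{n,k})ᵗ, with
r_{n,k} = e^{iφ_k − λ(n+1/2)}, the double sum converging absolutely. -/
theorem quantum_trace_eq_resonance_sum (M : Matrix (Fin 2) (Fin 2) ℤ)
    (hdet : M.det = 1) (htr : 2 < M.trace)
    (lam : ℝ) (hlam : 0 < lam)
    (heig : (M.trace : ℝ) = Real.exp lam + Real.exp (-lam))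
    (N : ℕ) (hN : 0 < N) (φ : Fin N → ℝ)
    (t : ℕ) (ht : 0 < t) :
    (∀ k : Fin N, Summable (fun n : ℕ =>
      ‖(Complex.exp (Complex.I * (φ k) - (lam * ((n : ℝ) + 1/2) : ℝ)))^t‖)) ∧
    (∑ k : Fin N, Complex.exp (Complex.I * (φ k) * t))
      = (Real.sqrt |(((1 : Matrix (Fin 2) (Fin 2) ℝ) - (M.map (Int.cast : ℤ → ℝ))^t).det)| : ℝ)
        * ∑ k : Fin N, ∑' n : ℕ,
            (Complex.exp (Complex.I * (φ k) - (lam * ((n : ℝ) + 1/2) : ℝ)))^t := by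
  set c : ℝ := lam * t with hc
  have hct : 0 < c := mul_pos hlam (by exact_mod_cast ht)
  set A : Matrix (Fin 2) (Fin 2) ℝ := M.map (Int.cast : ℤ → ℝ) with hA
  -- determinant and trace of A
  have hdA : A.det = 1 := by
    rw [hA, Matrix.det_fin_two] at *
    simp only [Matrix.map_apply]
    exact_mod_cast congrArg (Int.cast : ℤ → ℝ) hdet
  have htrA : A.trace = Real.exp lam + (Real.exp lam)⁻¹ := by
    have : A.trace = (M.trace : ℝ) := by
      simp [hA, Matrix.trace_fin_two]
    rw [this, heig, Real.exp_neg]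
  have hx : Real.exp lam ≠ 0 := (Real.exp_pos _).ne'
  -- trace of A^t
  have htrAt : (A ^ t).trace = Real.exp c + Real.exp (-c) := by
    rw [aux_trace_pow A hdA _ hx htrA t, ← Real.exp_neg, ← Real.exp_nat_mul, ← Real.exp_nat_mul]
    rw [hc]
    ring_nf
  -- the square root factor
  have hdetAt : (A ^ t).det = 1 := by rw [Matrix.det_pow, hdA, one_pow]
  have hsqrt : Real.sqrt |(((1 : Matrix (Fin 2) (Fin 2) ℝ) - A ^ t).det)|
      = Real.exp (c/2) - Real.exp (-(c/2)) := by
    rw [aux_det_one_sub _ hdetAt, htrAt, aux_sqrt c hct]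
  -- rewrite each resonance term
  have hterm : ∀ (k : Fin N) (n : ℕ),
      (Complex.exp (Complex.I * (φ k) - (lam * ((n : ℝ) + 1/2) : ℝ)))^t
        = Complex.exp (Complex.I * (φ k) * t) * (Real.exp (-(c/2)) : ℂ)
          * ((Real.exp (-c) : ℂ))^n := by
    intro k n
    rw [Complex.ofReal_exp, Complex.ofReal_exp, ← Complex.exp_nat_mul, ← Complex.exp_nat_mul,
      ← Complex.exp_add, ← Complex.exp_add]
    congr 1
    rw [hc]
    push_cast
    ring
  have hr : ‖((Real.exp (-c) : ℝ) : ℂ)‖ < 1 := by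
    rw [Complex.norm_real, Real.norm_eq_abs, abs_of_pos (Real.exp_pos _)]
    exact Real.exp_lt_one_iff.mpr (by linarith)
  constructor
  · intro k
    have : (fun n : ℕ => ‖(Complex.exp (Complex.I * (φ k) - (lam * ((n : ℝ) + 1/2) : ℝ)))^t‖)
        = fun n : ℕ => ‖Complex.exp (Complex.I * (φ k) * t) * (Real.exp (-(c/2)) : ℂ)‖
            * ‖((Real.exp (-c) : ℝ) : ℂ)‖^n := by
      funext n
      rw [hterm k n, norm_mul, norm_pow]
    rw [this]
    exact (summable_geometric_of_lt_one (norm_nonneg _) hr).mul_left _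
  · -- evaluate each inner tsum
    have htsum : ∀ k : Fin N,
        (∑' n : ℕ, (Complex.exp (Complex.I * (φ k) - (lam * ((n : ℝ) + 1/2) : ℝ)))^t)
          = Complex.exp (Complex.I * (φ k) * t) * (Real.exp (-(c/2)) : ℂ)
            * (1 - ((Real.exp (-c) : ℝ) : ℂ))⁻¹ := by
      intro k
      calc (∑' n : ℕ, (Complex.exp (Complex.I * (φ k) - (lam * ((n : ℝ) + 1/2) : ℝ)))^t)
          = ∑' n : ℕ, Complex.exp (Complex.I * (φ k) * t) * (Real.exp (-(c/2)) : ℂ)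
              * ((Real.exp (-c) : ℝ) : ℂ)^n := by
            exact tsum_congr fun n => hterm k n
        _ = Complex.exp (Complex.I * (φ k) * t) * (Real.exp (-(c/2)) : ℂ)
              * ∑' n : ℕ, ((Real.exp (-c) : ℝ) : ℂ)^n := tsum_mul_left
        _ = _ := by rw [tsum_geometric_of_norm_lt_one hr]
    rw [hsqrt]
    -- key scalar identity
    have hne : (1 : ℝ) - Real.exp (-c) ≠ 0 := by
      have : Real.exp (-c) < 1 := Real.exp_lt_one_iff.mpr (by linarith)
      linarith
    have hreal : (Real.exp (c/2) - Real.exp (-(c/2))) * Real.exp (-(c/2))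
        * (1 - Real.exp (-c))⁻¹ = 1 := by
      have hab : Real.exp (c/2) * Real.exp (-(c/2)) = 1 := by
        rw [← Real.exp_add]; simp
      have hb : Real.exp (-(c/2)) * Real.exp (-(c/2)) = Real.exp (-c) := by
        rw [← Real.exp_add]; ring_nf
      have h3 : (Real.exp (c/2) - Real.exp (-(c/2))) * Real.exp (-(c/2)) = 1 - Real.exp (-c) := by
        linear_combination hab - hb
      rw [h3, mul_inv_cancel₀ hne]
    have hkey : ((Real.exp (c/2) - Real.exp (-(c/2)) : ℝ) : ℂ) * ((Real.exp (-(c/2)) : ℝ) : ℂ)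
        * (1 - ((Real.exp (-c) : ℝ) : ℂ))⁻¹ = 1 := by
      exact_mod_cast hreal
    calc (∑ k : Fin N, Complex.exp (Complex.I * (φ k) * t))
        = ∑ k : Fin N, Complex.exp (Complex.I * (φ k) * t)
            * (((Real.exp (c/2) - Real.exp (-(c/2)) : ℝ) : ℂ) * ((Real.exp (-(c/2)) : ℝ) : ℂ)
              * (1 - ((Real.exp (-c) : ℝ) : ℂ))⁻¹) := by
          refine Finset.sum_congr rfl fun k _ => ?_
          rw [hkey, mul_one]
      _ = ((Real.exp (c/2) - Real.exp (-(c/2)) : ℝ) : ℂ)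
            * ∑ k : Fin N, Complex.exp (Complex.I * (φ k) * t) * ((Real.exp (-(c/2)) : ℝ) : ℂ)
              * (1 - ((Real.exp (-c) : ℝ) : ℂ))⁻¹ := by
          rw [Finset.mul_sum]
          exact Finset.sum_congr rfl fun k _ => by ring
      _ = _ := by
          congr 1
          exact (Finset.sum_congr rfl fun k _ => (htsum k).symm)
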